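/- (Orbit process dynamics between events.) Let a be a 1×p real row vector and S a p×p real matrix, and suppose a e^{St} e ≠ 0 for all t in an interval [0, T), where e is the all-ones column vector. Then the orbit A(t) := a e^{St} / (a e^{St} e) satisfies A(t) e = 1 for all t ∈ [0,T), A is differentiable on (0,T), and A'(t) = A(t) S − (A(t) S e) · A(t) for all t ∈ (0,T). -/

import Mathlib

open Matrix

attribute [local instance] Matrix.normedAddCommGroup Matrix.normedSpace

/-- `e^{St}` : the matrix exponential of `t • S`. -/
noncomputable def mexp {p : ℕ} (S : Matrix (Fin p) (Fin p) ℝ) (t : ℝ) :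
    Matrix (Fin p) (Fin p) ℝ := NormedSpace.exp (t • S)

/-! `A(t) = f(t) / ℓ(f(t))` with `ℓ = (· ⬝ᵥ e)` and `f(t) = a e^{St}`. Differentiating the quotient
gives `A' = f'/ℓ(f) - (ℓ(f')/ℓ(f)) A`, and `f' = f S` because `d/dt e^{St} = e^{St} S`. -/

theorem HasDerivAt.inv_apply_smul_self {𝕜 E : Type*} [NontriviallyNormedField 𝕜]
    [NormedAddCommGroup E] [NormedSpace 𝕜 E] (ℓ : E →L[𝕜] 𝕜) {f : 𝕜 → E} {f' : E} {t : 𝕜}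
    (hf : HasDerivAt f f' t) (hℓ : ℓ (f t) ≠ 0) :
    HasDerivAt (fun u => (ℓ (f u))⁻¹ • f u)
      ((ℓ (f t))⁻¹ • f' - ℓ ((ℓ (f t))⁻¹ • f') • (ℓ (f t))⁻¹ • f t) t := by
  refine (((ℓ.hasFDerivAt.comp_hasDerivAt t hf).inv hℓ).smul hf).congr_deriv ?_
  simp only [Function.comp_apply, Pi.inv_apply, map_smul, smul_eq_mul, smul_smul]
  rw [sub_eq_add_neg, ← neg_smul]
  congr 2
  field_simp

section

-- `hasDerivAt_exp_smul_const` needs a normed algebra structure on matrices; the operator norm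
-- gives one with the same topology, and the statement below involves only vectors.
attribute [-instance] Matrix.normedAddCommGroup Matrix.normedSpace
attribute [local instance] Matrix.linftyOpNormedRing Matrix.linftyOpNormedAlgebra

theorem hasDerivAt_vecMul_mexp {p : ℕ} (a : Fin p → ℝ) (S : Matrix (Fin p) (Fin p) ℝ) (t : ℝ) :
    HasDerivAt (fun u => a ᵥ* mexp S u) ((a ᵥ* mexp S t) ᵥ* S) t := by
  rw [vecMul_vecMul]
  exact (LinearMap.toContinuousLinearMap (vecMulBilin ℝ ℝ a)).hasFDerivAt.comp_hasDerivAt t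
    (hasDerivAt_exp_smul_const S t)

end

theorem orbit_dynamics_general
    (p : ℕ) (a : Fin p → ℝ) (S : Matrix (Fin p) (Fin p) ℝ) (T : ℝ)
    (hne : ∀ t ∈ Set.Ico (0 : ℝ) T,
      (a ᵥ* mexp S t) ⬝ᵥ (fun _ => (1 : ℝ)) ≠ 0) :
    (∀ t ∈ Set.Ico (0 : ℝ) T,
      ((((a ᵥ* mexp S t) ⬝ᵥ (fun _ => (1 : ℝ)))⁻¹ • (a ᵥ* mexp S t))
        ⬝ᵥ (fun _ => (1 : ℝ))) = 1)
    ∧ ∀ t ∈ Set.Ioo (0 : ℝ) T,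
        HasDerivAt
          (fun u : ℝ => (((a ᵥ* mexp S u) ⬝ᵥ (fun _ => (1 : ℝ)))⁻¹ • (a ᵥ* mexp S u)))
          (((((a ᵥ* mexp S t) ⬝ᵥ (fun _ => (1 : ℝ)))⁻¹ • (a ᵥ* mexp S t)) ᵥ* S)
            - (((((a ᵥ* mexp S t) ⬝ᵥ (fun _ => (1 : ℝ)))⁻¹ • (a ᵥ* mexp S t)) ᵥ* S)
                  ⬝ᵥ (fun _ => (1 : ℝ)))
                • (((a ᵥ* mexp S t) ⬝ᵥ (fun _ => (1 : ℝ)))⁻¹ • (a ᵥ* mexp S t)))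
          t := by
  refine ⟨fun t ht => ?_, fun t ht => ?_⟩
  · rw [smul_dotProduct, smul_eq_mul, inv_mul_cancel₀ (hne t ht)]
  · let ℓ : (Fin p → ℝ) →L[ℝ] ℝ :=
      LinearMap.toContinuousLinearMap ((dotProductBilin ℝ ℝ).flip fun _ => 1)
    rw [smul_vecMul]
    exact (hasDerivAt_vecMul_mexp a S t).inv_apply_smul_self ℓ (hne t ⟨ht.1.le, ht.2⟩)

/-- orbit process dynamics between events:
with `A(t) = a e^{St}/(a e^{St} e)`, `A(t) e = 1` on `[0,T)`, `A` is differentiable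
on `(0,T)` and `A'(t) = A(t) S - (A(t) S e)·A(t)` there. -/
theorem orbit_dynamics
    (p : ℕ) (hp : 1 ≤ p) (a : Fin p → ℝ) (S : Matrix (Fin p) (Fin p) ℝ) (T : ℝ)
    (hne : ∀ t ∈ Set.Ico (0 : ℝ) T,
      (a ᵥ* mexp S t) ⬝ᵥ (fun _ => (1 : ℝ)) ≠ 0) :
    (∀ t ∈ Set.Ico (0 : ℝ) T,
      ((((a ᵥ* mexp S t) ⬝ᵥ (fun _ => (1 : ℝ)))⁻¹ • (a ᵥ* mexp S t))
        ⬝ᵥ (fun _ => (1 : ℝ))) = 1)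
    ∧ ∀ t ∈ Set.Ioo (0 : ℝ) T,
        HasDerivAt
          (fun u : ℝ => (((a ᵥ* mexp S u) ⬝ᵥ (fun _ => (1 : ℝ)))⁻¹ • (a ᵥ* mexp S u)))
          (((((a ᵥ* mexp S t) ⬝ᵥ (fun _ => (1 : ℝ)))⁻¹ • (a ᵥ* mexp S t)) ᵥ* S)
            - (((((a ᵥ* mexp S t) ⬝ᵥ (fun _ => (1 : ℝ)))⁻¹ • (a ᵥ* mexp S t)) ᵥ* S)
                  ⬝ᵥ (fun _ => (1 : ℝ)))
                • (((a ᵥ* mexp S t) ⬝ᵥ (fun _ => (1 : ℝ)))⁻¹ • (a ᵥ* mexp S t)))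
          t :=
  orbit_dynamics_general p a S T hne
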